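/- arXiv:1605.08094 — 2 statements merged into one kernel-verified Lean document; each statement's English description precedes it below -/
import Mathlib

section
/- For any odd elements θ₁, θ₂ ∈ Λ₁, the prime transformation P′ := [[θ₁θ₂/2 − 1, θ₁, 1],[−θ₂, 1, 0],[−1, 0, 0]] satisfies P′∘P′∘P′ = diag(1 − θ₁θ₂/2, 1 − θ₁θ₂, 1 − θ₁θ₂/2) = Z_{1−θ₁θ₂/2}, where Z_a := diag(a, a², a). -/
/- STATEMENT 5: the prime transformation P′ satisfies P′∘P′∘P′ = Z_{1−θ₁θ₂/2}. -/

noncomputable section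

variable {V : Type*} [AddCommGroup V] [Module ℝ V]

/-- Membership in the odd part Λ₁ of the Grassmann algebra. -/
def IsOdd (x : ExteriorAlgebra ℝ V) : Prop :=
  x ∈ CliffordAlgebra.evenOdd (0 : QuadraticForm ℝ V) 1

/-- The odd positions of a 3×3 supermatrix. -/
def oddPos (i j : Fin 3) : Bool := (i == 1) != (j == 1)

/-- The super matrix product. -/
def sMul {A : Type*} [Ring A] (M N : Matrix (Fin 3) (Fin 3) A) :
    Matrix (Fin 3) (Fin 3) A :=
  Matrix.of fun i j => ∑ k : Fin 3,
    if oddPos i k && oddPos k j then -(M i k * N k j) else M i k * N k j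

/-- `Z_a = diag(a, a², a)`. -/
def Zmat {A : Type*} [Ring A] (a : A) : Matrix (Fin 3) (Fin 3) A :=
  !![a, 0, 0; 0, a * a, 0; 0, 0, a]

/-- The prime transformation `P′`. -/
def Pprime (θ₁ θ₂ : ExteriorAlgebra ℝ V) :
    Matrix (Fin 3) (Fin 3) (ExteriorAlgebra ℝ V) :=
  !![(1/2 : ℝ) • (θ₁ * θ₂) - 1, θ₁, 1; -θ₂, 1, 0; -1, 0, 0]

lemma vv_anticomm (v w : V) :
    ExteriorAlgebra.ι ℝ v * ExteriorAlgebra.ι ℝ w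
      = -(ExteriorAlgebra.ι ℝ w * ExteriorAlgebra.ι ℝ v) := by
  have h := ExteriorAlgebra.ι_sq_zero (R := ℝ) (v + w)
  simp only [map_add, add_mul, mul_add, ExteriorAlgebra.ι_sq_zero] at h
  linear_combination (norm := noncomm_ring) h

lemma vec_anticomm (v : V) (y : ExteriorAlgebra ℝ V) (hy : IsOdd y) :
    ExteriorAlgebra.ι ℝ v * y = -(y * ExteriorAlgebra.ι ℝ v) := by
  induction y, hy using CliffordAlgebra.odd_induction with
  | ι w => exact vv_anticomm v w
  | add x y hx hy ihx ihy => rw [mul_add, ihx, ihy, add_mul]; abel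
  | ι_mul_ι_mul m₁ m₂ x hx ih =>
    set c := ExteriorAlgebra.ι ℝ v
    set a := ExteriorAlgebra.ι ℝ m₁
    set b := ExteriorAlgebra.ι ℝ m₂
    have h1 : c * a = -(a * c) := vv_anticomm v m₁
    have h2 : c * b = -(b * c) := vv_anticomm v m₂
    calc c * (a * b * x) = (c * a) * (b * x) := by noncomm_ring
      _ = (-(a * c)) * (b * x) := by rw [h1]
      _ = -(a * ((c * b) * x)) := by noncomm_ring
      _ = -(a * ((-(b * c)) * x)) := by rw [h2]
      _ = a * (b * (c * x)) := by noncomm_ring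
      _ = a * (b * (-(x * c))) := by rw [ih]
      _ = -(a * b * x * c) := by noncomm_ring

lemma odd_anticomm (x y : ExteriorAlgebra ℝ V) (hx : IsOdd x) (hy : IsOdd y) :
    x * y = -(y * x) := by
  induction x, hx using CliffordAlgebra.odd_induction with
  | ι w => exact vec_anticomm w y hy
  | add a b ha hb iha ihb => rw [add_mul, iha, ihb, mul_add]; abel
  | ι_mul_ι_mul m₁ m₂ x hx ih =>
    set a := ExteriorAlgebra.ι ℝ m₁
    set b := ExteriorAlgebra.ι ℝ m₂
    have h1 : a * y = -(y * a) := vec_anticomm m₁ y hy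
    have h2 : b * y = -(y * b) := vec_anticomm m₂ y hy
    calc a * b * x * y = a * b * (x * y) := by noncomm_ring
      _ = a * b * (-(y * x)) := by rw [ih]
      _ = a * (-(b * y)) * x := by noncomm_ring
      _ = a * (-(-(y * b))) * x := by rw [h2]
      _ = (a * y) * b * x := by noncomm_ring
      _ = (-(y * a)) * b * x := by rw [h1]
      _ = -(y * (a * b * x)) := by noncomm_ring

lemma odd_sq (x : ExteriorAlgebra ℝ V) (hx : IsOdd x) : x * x = 0 := by
  have h := odd_anticomm x x hx hx
  have h2 : (2:ℝ) • (x * x) = 0 := by rw [two_smul]; rw [eq_neg_iff_add_eq_zero] at h; exact h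
  calc x * x = (2:ℝ)⁻¹ • ((2:ℝ) • (x * x)) := by rw [smul_smul]; norm_num
    _ = 0 := by rw [h2, smul_zero]
theorem stmt5 (θ₁ θ₂ : ExteriorAlgebra ℝ V) (hθ₁ : IsOdd θ₁) (hθ₂ : IsOdd θ₂) :
    sMul (sMul (Pprime θ₁ θ₂) (Pprime θ₁ θ₂)) (Pprime θ₁ θ₂) =
      !![1 - (1/2 : ℝ) • (θ₁ * θ₂), 0, 0;
         0, 1 - θ₁ * θ₂, 0;
         0, 0, 1 - (1/2 : ℝ) • (θ₁ * θ₂)] ∧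
    sMul (sMul (Pprime θ₁ θ₂) (Pprime θ₁ θ₂)) (Pprime θ₁ θ₂) =
      Zmat (1 - (1/2 : ℝ) • (θ₁ * θ₂)) := by
  have e11 : θ₁ * θ₁ = 0 := odd_sq θ₁ hθ₁
  have e22 : θ₂ * θ₂ = 0 := odd_sq θ₂ hθ₂
  have e21 : θ₂ * θ₁ = -(θ₁ * θ₂) := odd_anticomm θ₂ θ₁ hθ₂ hθ₁
  have h11 : ∀ x : ExteriorAlgebra ℝ V, θ₁ * (θ₁ * x) = 0 := fun x => by
    rw [← mul_assoc, e11, zero_mul]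
  have h22 : ∀ x : ExteriorAlgebra ℝ V, θ₂ * (θ₂ * x) = 0 := fun x => by
    rw [← mul_assoc, e22, zero_mul]
  have h21 : ∀ x : ExteriorAlgebra ℝ V, θ₂ * (θ₁ * x) = -(θ₁ * (θ₂ * x)) := fun x => by
    rw [← mul_assoc, ← mul_assoc, e21, neg_mul]
  have key : sMul (sMul (Pprime θ₁ θ₂) (Pprime θ₁ θ₂)) (Pprime θ₁ θ₂) =
      !![1 - (1/2 : ℝ) • (θ₁ * θ₂), 0, 0;
         0, 1 - θ₁ * θ₂, 0;
         0, 0, 1 - (1/2 : ℝ) • (θ₁ * θ₂)] := by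
    ext i j
    fin_cases i <;> fin_cases j <;>
      simp only [show ∀ h : (0:ℕ) < 3, (⟨0,h⟩:Fin 3) = 0 from fun _ => rfl,
        show ∀ h : (1:ℕ) < 3, (⟨1,h⟩:Fin 3) = 1 from fun _ => rfl,
        show ∀ h : (2:ℕ) < 3, (⟨2,h⟩:Fin 3) = 2 from fun _ => rfl] <;>
      simp only [sMul, Pprime, oddPos, Matrix.of_apply, Fin.sum_univ_three,
        Matrix.cons_val', Matrix.cons_val_zero, Matrix.cons_val_one, Matrix.head_cons,
        Matrix.cons_val_two, Matrix.tail_cons, Matrix.head_fin_const, Matrix.empty_val',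
        Matrix.cons_val_fin_one] <;>
      simp only [show ((0:Fin 3) == 1) = false from rfl,
        show ((1:Fin 3) == 1) = true from rfl, show ((2:Fin 3) == 1) = false from rfl,
        show ∀ h : (0:ℕ) < 3, ((⟨0,h⟩:Fin 3) == 1) = false from fun _ => rfl,
        show ∀ h : (1:ℕ) < 3, ((⟨1,h⟩:Fin 3) == 1) = true from fun _ => rfl,
        show ∀ h : (2:ℕ) < 3, ((⟨2,h⟩:Fin 3) == 1) = false from fun _ => rfl,
        Bool.false_bne, Bool.bne_true, Bool.true_bne, Bool.not_false, Bool.not_true,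
        Bool.and_false, Bool.and_true, Bool.false_and, Bool.true_and, Bool.and_self,
        if_true, if_false, Bool.false_eq_true, Bool.true_eq_false, ite_false, ite_true] <;>
      simp only [mul_sub, sub_mul, mul_add, add_mul, mul_one, one_mul, mul_zero, zero_mul,
        mul_neg, neg_mul, neg_neg, smul_mul_assoc, mul_smul_comm, mul_assoc,
        e11, e22, e21, h11, h22, h21, smul_zero, neg_zero, smul_neg,
        zero_add, add_zero, sub_zero, zero_sub] <;>
      module
  refine ⟨key, key.trans ?_⟩
  have : (1 - (1/2 : ℝ) • (θ₁ * θ₂)) * (1 - (1/2 : ℝ) • (θ₁ * θ₂)) = 1 - θ₁ * θ₂ := by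
    have : θ₁ * (θ₂ * (θ₁ * θ₂)) = 0 := by rw [h21, e22, mul_zero, neg_zero, mul_zero]
    simp only [mul_sub, sub_mul, mul_one, one_mul, smul_mul_assoc, mul_smul_comm,
      mul_assoc, this, smul_zero]
    module
  rw [Zmat, this]
end
end

section
/- Let t, h, a ∈ Λ₀ be even with h and a invertible, and let θ₁, θ₂ ∈ Λ₁ be odd. Set B := t·(1, 1, 1, θ₁θ₂/2 | hθ₁, h⁻¹θ₂, −h⁻¹θ₂, hθ₁). Then applying successively the coordinate actions of Z_h, then D_a, then J to B yields the tuple t·(a⁻², a², −1, θ₁θ₂/2 | a⁻¹θ₁, a⁻¹θ₂, aθ₂, −aθ₁). Moreover, using the convention that for a point with coordinates (x₁, x₂, −y, z | ξ₁⁺, ξ₂⁺, ξ₁⁻, ξ₂⁻) the odd parameters are σᵢ = −w⁻¹ξᵢ⁺ for any even w with w² = y·x₁, one may take w = t·a⁻¹ for the image point (since (ta⁻¹)² = t·(ta⁻²)), and the extracted odd parameters are σ₁ = −θ₁, σ₂ = −θ₂. Thus the upside-down transformation J∘D_a∘Z_h sends a triangle with odd invariant θ = (θ₁,θ₂) and ratio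 h to one whose odd invariant is −θ = (−θ₁,−θ₂). -/
/- STATEMENT 16 (Lemma 5.6(3) of the paper): the upside-down transformation
J∘D_a∘Z_h sends a triangle with odd invariant θ = (θ₁,θ₂) and ratio h to one with
odd invariant −θ = (−θ₁,−θ₂). -/

noncomputable section

variable {V : Type*} [AddCommGroup V] [Module ℝ V]

/-- Membership in the even part Λ₀ of the Grassmann algebra. -/
def IsEven (x : ExteriorAlgebra ℝ V) : Prop :=
  x ∈ CliffordAlgebra.evenOdd (0 : QuadraticForm ℝ V) 0

/-- A coordinate tuple (x₁,x₂,y,z | ξ₁⁺,ξ₂⁺,ξ₁⁻,ξ₂⁻) in superspace ℝ^{2,2|4}. -/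
structure STuple (V : Type*) [AddCommGroup V] [Module ℝ V] where
  x₁ : ExteriorAlgebra ℝ V
  x₂ : ExteriorAlgebra ℝ V
  y : ExteriorAlgebra ℝ V
  z : ExteriorAlgebra ℝ V
  ξ₁p : ExteriorAlgebra ℝ V
  ξ₂p : ExteriorAlgebra ℝ V
  ξ₁m : ExteriorAlgebra ℝ V
  ξ₂m : ExteriorAlgebra ℝ V

/-- Componentwise scalar multiplication of a coordinate tuple. -/
def tsmul (c : ExteriorAlgebra ℝ V) (T : STuple V) : STuple V :=
  ⟨c * T.x₁, c * T.x₂, c * T.y, c * T.z, c * T.ξ₁p, c * T.ξ₂p, c * T.ξ₁m, c * T.ξ₂m⟩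

/-- The coordinate action of `Z_h`, with `hi` the inverse of `h`:
(x₁,x₂,y,z|ξ₁⁺,ξ₂⁺,ξ₁⁻,ξ₂⁻) ↦ (x₁,x₂,y,z | h⁻¹ξ₁⁺, hξ₂⁺, hξ₁⁻, h⁻¹ξ₂⁻). -/
def Zact (h hi : ExteriorAlgebra ℝ V) (T : STuple V) : STuple V :=
  ⟨T.x₁, T.x₂, T.y, T.z, hi * T.ξ₁p, h * T.ξ₂p, h * T.ξ₁m, hi * T.ξ₂m⟩

/-- The coordinate action of `D_a`, with `ai` the inverse of `a`:
(x₁,x₂,y,z|ξ₁⁺,ξ₂⁺,ξ₁⁻,ξ₂⁻) ↦ (a²x₁, a⁻²x₂, y, z | aξ₁⁺, aξ₂⁺, a⁻¹ξ₁⁻, a⁻¹ξ₂⁻). -/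
def Dact (a ai : ExteriorAlgebra ℝ V) (T : STuple V) : STuple V :=
  ⟨a * a * T.x₁, ai * ai * T.x₂, T.y, T.z,
    a * T.ξ₁p, a * T.ξ₂p, ai * T.ξ₁m, ai * T.ξ₂m⟩

/-- The coordinate action of `J`:
(x₁,x₂,y,z|ξ₁⁺,ξ₂⁺,ξ₁⁻,ξ₂⁻) ↦ (x₂, x₁, −y, z | ξ₂⁻, −ξ₁⁻, ξ₂⁺, −ξ₁⁺). -/
def Jact (T : STuple V) : STuple V :=
  ⟨T.x₂, T.x₁, -T.y, T.z, T.ξ₂m, -T.ξ₁m, T.ξ₂p, -T.ξ₁p⟩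

lemma iota_mul_iota_commute (m₁ m₂ : V) (y : ExteriorAlgebra ℝ V) :
    Commute (CliffordAlgebra.ι (0 : QuadraticForm ℝ V) m₁ *
      CliffordAlgebra.ι (0 : QuadraticForm ℝ V) m₂) y := by
  induction y using CliffordAlgebra.induction with
  | algebraMap r => exact (Algebra.commutes r _).symm
  | ι m =>
      have h1 : ∀ u v : V, CliffordAlgebra.ι (0 : QuadraticForm ℝ V) u *
          CliffordAlgebra.ι (0 : QuadraticForm ℝ V) v =
          -(CliffordAlgebra.ι (0 : QuadraticForm ℝ V) v *
            CliffordAlgebra.ι (0 : QuadraticForm ℝ V) u) := by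
        intro u v
        have := CliffordAlgebra.ι_mul_ι_add_swap (Q := (0 : QuadraticForm ℝ V)) u v
        rw [show QuadraticMap.polar (0 : QuadraticForm ℝ V) u v = 0 by
          simp [QuadraticMap.polar], map_zero] at this
        exact eq_neg_of_add_eq_zero_left this
      show _ = _
      calc CliffordAlgebra.ι (0 : QuadraticForm ℝ V) m₁ *
            CliffordAlgebra.ι (0 : QuadraticForm ℝ V) m₂ *
            CliffordAlgebra.ι (0 : QuadraticForm ℝ V) m
          = CliffordAlgebra.ι (0 : QuadraticForm ℝ V) m₁ *
            -(CliffordAlgebra.ι (0 : QuadraticForm ℝ V) m *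
              CliffordAlgebra.ι (0 : QuadraticForm ℝ V) m₂) := by
              rw [mul_assoc, ← h1]
        _ = -(CliffordAlgebra.ι (0 : QuadraticForm ℝ V) m₁ *
              CliffordAlgebra.ι (0 : QuadraticForm ℝ V) m) *
            CliffordAlgebra.ι (0 : QuadraticForm ℝ V) m₂ := by
              simp only [mul_neg, neg_mul, mul_assoc]
        _ = _ := by rw [← h1]; rw [mul_assoc]
  | mul x y hx hy => exact hx.mul_right hy
  | add x y hx hy => exact hx.add_right hy

lemma even_central {x : ExteriorAlgebra ℝ V} (hx : IsEven x)
    (y : ExteriorAlgebra ℝ V) : Commute x y := by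
  induction x, hx using CliffordAlgebra.even_induction with
  | algebraMap r => exact Algebra.commutes r y
  | add a b _ _ ha hb => exact ha.add_left hb
  | ι_mul_ι_mul m₁ m₂ z _ hz => exact (iota_mul_iota_commute m₁ m₂ y).mul_left hz


theorem stmt16
    (t h a hi ai : ExteriorAlgebra ℝ V) (θ₁ θ₂ : ExteriorAlgebra ℝ V)
    (ht : IsEven t) (hh : IsEven h) (ha : IsEven a)
    (hhi : h * hi = 1) (hhi' : hi * h = 1)
    (hai : a * ai = 1) (hai' : ai * a = 1)
    (hθ₁ : IsOdd θ₁) (hθ₂ : IsOdd θ₂)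
    -- B := t·(1, 1, 1, θ₁θ₂/2 | hθ₁, h⁻¹θ₂, −h⁻¹θ₂, hθ₁)
    (B : STuple V)
    (hB : B = tsmul t ⟨1, 1, 1, (1/2 : ℝ) • (θ₁ * θ₂),
        h * θ₁, hi * θ₂, -(hi * θ₂), h * θ₁⟩) :
    -- applying Z_h, then D_a, then J yields t·(a⁻², a², −1, θ₁θ₂/2 |
    --   a⁻¹θ₁, a⁻¹θ₂, aθ₂, −aθ₁)
    Jact (Dact a ai (Zact h hi B)) =
      tsmul t ⟨ai * ai, a * a, -1, (1/2 : ℝ) • (θ₁ * θ₂),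
        ai * θ₁, ai * θ₂, a * θ₂, -(a * θ₁)⟩ ∧
    -- w := ta⁻¹ satisfies w² = y·x₁ for the image point, whose coordinates are
    -- (x₁, x₂, −y, z | ξ₁⁺, …) with y = t, x₁ = ta⁻²; and the extracted odd
    -- parameters σᵢ, characterized by w·σᵢ = −ξᵢ⁺, are σ₁ = −θ₁ and σ₂ = −θ₂:
    (t * ai) * (t * ai) = t * (t * (ai * ai)) ∧
    (t * ai) * (-θ₁) = -(t * (ai * θ₁)) ∧
    (t * ai) * (-θ₂) = -(t * (ai * θ₂)) := by
  subst hB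
  have ct : ∀ y : ExteriorAlgebra ℝ V, Commute t y := even_central ht
  have swap : ∀ c y : ExteriorAlgebra ℝ V, c * (t * y) = t * (c * y) := fun c y => by
    rw [(ct y).eq, ← mul_assoc, ← (ct (c * y)).eq]
  refine ⟨?_, ?_, ?_, ?_⟩
  · simp only [Zact, Dact, Jact, tsmul, mul_one]
    congr 1
    · rw [(ct (ai * ai)).eq]
    · rw [(ct (a * a)).eq]
    · rw [mul_neg_one]
    · rw [swap hi (h * θ₁), ← mul_assoc hi h, hhi', one_mul, swap ai θ₁]
    · simp only [mul_neg, neg_neg]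
      rw [swap h (hi * θ₂), ← mul_assoc h hi, hhi, one_mul, swap ai θ₂]
    · rw [swap h (hi * θ₂), ← mul_assoc h hi, hhi, one_mul, swap a θ₂]
    · rw [swap hi (h * θ₁), ← mul_assoc hi h, hhi', one_mul, swap a θ₁, mul_neg]
  · rw [mul_assoc, swap ai ai]
  · rw [mul_neg, mul_assoc]
  · rw [mul_neg, mul_assoc]
end
end
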